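/- arXiv:2307.09399 — 2 statements merged into one kernel-verified Lean document; each statement's English description precedes it below -/
import Mathlib

section
/- For all integers c ≥ 5 and g ≥ 2, t(c,g) + t_p(c,g) = t(c−2,g) + t_p(c−2,g) + t(c−2,g−1) + t_p(c−2,g−1) + 2·t_p(2c−4, 2g−1). (Equivalently, the number t̄(c,g) = (t(c,g)+t_p(c,g))/2 of 2-bridge knots with crossing number c and genus g satisfies t̄(c,g) = t̄(c−2,g) + t̄(c−2,g−1) + t_p(2c−4,2g−1).) -/
/-- `tKnot c g` is t(c,g), the number of words in the partially double counted set T(c)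
representing 2-bridge knots of crossing number `c` and genus `g`, given by the explicit
formula t(c,g) = (-1)^(c-1) * Σ_{n=0}^{c-2g-1} (-1)^n * binom(n+2g-1, n), the sum being
empty when c - 2g - 1 < 0, and t(c,0) = 0. -/
def tKnot (c g : ℕ) : ℤ :=
  if g = 0 then 0
  else (-1 : ℤ) ^ (c - 1) *
    ∑ n ∈ Finset.range (c - 2 * g), (-1 : ℤ) ^ n * (Nat.choose (n + 2 * g - 1) n)

/-- `tpKnot c g` is t_p(c,g), the number of words of palindromic type representing
2-bridge knots of crossing number `c` and genus `g`, given by the explicit formula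
t_p(c,g) = (-1)^(c'-g-1) * Σ_{n=0}^{c'-g-1} (-1)^n * binom(n+g-1, n) with
c' = ⌊(c+1)/2⌋, the sum being empty when c' - g - 1 < 0, and t_p(c,0) = 0. -/
def tpKnot (c g : ℕ) : ℤ :=
  if g = 0 then 0
  else (-1 : ℤ) ^ ((c + 1) / 2 - g - 1) *
    ∑ n ∈ Finset.range ((c + 1) / 2 - g), (-1 : ℤ) ^ n * (Nat.choose (n + g - 1) n)

/-!
Both counts are values of `F a m = (-1)^(m-1) Σ_{n<m} (-1)^n C(n+a-1, n)`:
`t(c,g) = F (2g) (c-2g)` and `t_p(c,g) = F g (⌊(c+1)/2⌋-g)`. Pascal's rule gives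
`F (a+1) m = F (a+1) (m-1) + F a m`, which is already the recurrence for `t_p`; applied twice it gives
`F (a+2) m = F (a+2) (m-2) + 2 F (a+1) (m-1) + F a m`, the recurrence for `t`, whose middle term is
`2 t_p(2c-4, 2g-1) = 2 F (2g-1) (c-2g-1)`.
-/

def altChooseSum (a m : ℕ) : ℤ :=
  (-1 : ℤ) ^ (m - 1) * ∑ n ∈ Finset.range m, (-1 : ℤ) ^ n * (Nat.choose (n + a - 1) n)

@[simp]
lemma altChooseSum_zero_right (a : ℕ) : altChooseSum a 0 = 0 := by
  simp [altChooseSum]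

lemma altChooseSum_succ (a m : ℕ) :
    altChooseSum a (m + 1) = Nat.choose (m + a - 1) m - altChooseSum a m := by
  rcases m with _ | m
  · simp [altChooseSum]
  · have sq : (-1 : ℤ) ^ (m + 1) * (-1) ^ (m + 1) = 1 := by
      rw [← pow_add, ← two_mul, pow_mul]
      norm_num
    rw [altChooseSum, altChooseSum, Finset.sum_range_succ, Nat.add_sub_cancel, Nat.add_sub_cancel]
    linear_combination ((m + 1 + a - 1).choose (m + 1) : ℤ) * sq

lemma altChooseSum_succ_left (a n : ℕ) :
    altChooseSum (a + 1) n = altChooseSum (a + 1) (n - 1) + altChooseSum a n := by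
  rcases n with _ | m
  · simp
  rw [Nat.add_sub_cancel]
  induction m with
  | zero => simp [altChooseSum]
  | succ m ih =>
    have pascal : ((m + 1 + (a + 1) - 1).choose (m + 1) : ℤ) =
        (m + (a + 1) - 1).choose m + (m + 1 + a - 1).choose (m + 1) := by
      rw [show m + 1 + (a + 1) - 1 = (m + a) + 1 by omega, Nat.choose_succ_succ',
        show m + (a + 1) - 1 = m + a by omega, show m + 1 + a - 1 = m + a by omega]
      push_cast
      ring
    rw [altChooseSum_succ (a + 1) (m + 1), altChooseSum_succ a (m + 1)]
    linear_combination pascal - ih - altChooseSum_succ (a + 1) m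

lemma altChooseSum_add_two_left (a n : ℕ) :
    altChooseSum (a + 2) n =
      altChooseSum (a + 2) (n - 2) + 2 * altChooseSum (a + 1) (n - 1) + altChooseSum a n := by
  have h₁ := altChooseSum_succ_left (a + 1) n
  have h₂ := altChooseSum_succ_left (a + 1) (n - 1)
  have h₃ := altChooseSum_succ_left a n
  rw [Nat.sub_sub] at h₂
  linear_combination h₁ + h₂ + h₃

lemma tpKnot_eq_altChooseSum (c g : ℕ) (hg : g ≠ 0) :
    tpKnot c g = altChooseSum g ((c + 1) / 2 - g) := by
  simp [tpKnot, altChooseSum, hg]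

lemma tKnot_eq_altChooseSum (c g : ℕ) (hg : g ≠ 0) :
    tKnot c g = altChooseSum (2 * g) (c - 2 * g) := by
  rw [tKnot, if_neg hg, altChooseSum]
  rcases Nat.eq_zero_or_pos (c - 2 * g) with h | h
  · simp [h]
  · congr 1
    rw [show c - 1 = (c - 2 * g - 1) + 2 * g by omega, pow_add, pow_mul]
    simp

lemma tpKnot_recurrence (c g : ℕ) (hg : 2 ≤ g) :
    tpKnot c g = tpKnot (c - 2) g + tpKnot (c - 2) (g - 1) := by
  obtain ⟨a, rfl⟩ : ∃ a, g = a + 1 := ⟨g - 1, by omega⟩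
  rw [tpKnot_eq_altChooseSum _ _ (by omega), tpKnot_eq_altChooseSum _ _ (by omega),
    tpKnot_eq_altChooseSum _ _ (by omega), altChooseSum_succ_left, Nat.add_sub_cancel]
  congr 2 <;> omega

lemma tKnot_recurrence (c g : ℕ) (hg : 2 ≤ g) :
    tKnot c g = tKnot (c - 2) g + tKnot (c - 2) (g - 1) + 2 * tpKnot (2 * c - 4) (2 * g - 1) := by
  obtain ⟨a, rfl⟩ : ∃ a, g = a + 1 := ⟨g - 1, by omega⟩
  rw [Nat.add_sub_cancel, tKnot_eq_altChooseSum c (a + 1) (by omega),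
    tKnot_eq_altChooseSum (c - 2) (a + 1) (by omega), tKnot_eq_altChooseSum (c - 2) a (by omega),
    tpKnot_eq_altChooseSum _ _ (by omega), show 2 * (a + 1) = 2 * a + 2 by ring,
    show 2 * a + 2 - 1 = 2 * a + 1 by omega, show c - 2 - 2 * a = c - (2 * a + 2) by omega,
    show c - 2 - (2 * a + 2) = c - (2 * a + 2) - 2 by omega,
    show (2 * c - 4 + 1) / 2 - (2 * a + 1) = c - (2 * a + 2) - 1 by omega,
    altChooseSum_add_two_left]
  ring

theorem tbar_recurrence_general (c g : ℕ) (hg : 2 ≤ g) :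
    tKnot c g + tpKnot c g =
      tKnot (c - 2) g + tpKnot (c - 2) g + tKnot (c - 2) (g - 1) + tpKnot (c - 2) (g - 1) +
        2 * tpKnot (2 * c - 4) (2 * g - 1) := by
  rw [tKnot_recurrence c g hg, tpKnot_recurrence c g hg]
  ring

/-- For all integers c ≥ 5 and g ≥ 2,
t(c,g) + t_p(c,g) = t(c−2,g) + t_p(c−2,g) + t(c−2,g−1) + t_p(c−2,g−1) + 2·t_p(2c−4, 2g−1),
i.e. the number of 2-bridge knots satisfies t̄(c,g) = t̄(c−2,g) + t̄(c−2,g−1) + t_p(2c−4,2g−1). -/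
theorem tbar_recurrence (c g : ℕ) (hc : 5 ≤ c) (hg : 2 ≤ g) :
    tKnot c g + tpKnot c g =
      tKnot (c - 2) g + tpKnot (c - 2) g + tKnot (c - 2) (g - 1) + tpKnot (c - 2) (g - 1) +
        2 * tpKnot (2 * c - 4) (2 * g - 1) :=
  tbar_recurrence_general c g hg
end

section
/- For all integers c ≥ 3, the total genus satisfies 432·g(c) = (9c+3)·2^c − 192·(−1)^c; equivalently, g(c) = ((9c+3)·2^{c−3} − 24·(−1)^c)/54. -/
/-- `gTotal c` is the total genus g(c) = Σ_{i=1}^{⌊(c−1)/2⌋} i·t(c,i) of T(c). -/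
def gTotal (c : ℕ) : ℤ := ∑ i ∈ Finset.Icc 1 ((c - 1) / 2), (i : ℤ) * tKnot c i

open Finset

theorem two_mul_sum_range_odd {R : Type*} [CommRing R] (f : ℕ → R) (n : ℕ) :
    2 * ∑ i ∈ range n, f (2 * i + 1) = ∑ k ∈ range (2 * n), (1 - (-1) ^ k) * f k := by
  induction n with
  | zero => simp
  | succ n ih =>
    rw [mul_add_one, sum_range_succ, sum_range_succ, sum_range_succ, mul_add, ih,
      pow_succ, pow_mul]
    ring

theorem Int.alternating_sum_range_mul_choose {m : ℕ} (hm : 2 ≤ m) :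
    ∑ k ∈ Finset.range (m + 1), (-1 : ℤ) ^ k * (k * m.choose k) = 0 := by
  obtain ⟨s, rfl⟩ : ∃ s, m = s + 1 := ⟨m - 1, by omega⟩
  have hshift (k : ℕ) : (-1 : ℤ) ^ (k + 1) * (((k + 1 : ℕ) : ℤ) * (s + 1).choose (k + 1)) =
      -(s + 1) * ((-1) ^ k * s.choose k) := by
    have := Nat.add_one_mul_choose_eq s k
    rw [mul_comm _ (k + 1)] at this
    rw [← Nat.cast_mul, ← this]
    push_cast
    ring
  rw [sum_range_succ', sum_congr rfl fun k _ => hshift k, ← mul_sum,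
    Int.alternating_sum_range_choose_of_ne (by omega)]
  simp

theorem sum_range_succ_mul_choose_odd {m n : ℕ} (hm : 2 ≤ m) (hn : m < 2 * n) :
    4 * ∑ i ∈ range n, ((i : ℤ) + 1) * m.choose (2 * i + 1) = (m + 2) * 2 ^ (m - 1) := by
  have htrim : ∑ k ∈ range (2 * n), (1 - (-1) ^ k) * (((k : ℤ) + 1) * m.choose k) =
      ∑ k ∈ range (m + 1), (1 - (-1) ^ k) * (((k : ℤ) + 1) * m.choose k) := by
    refine (sum_subset (range_subset_range.2 (by omega)) fun k _ hk => ?_).symm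
    rw [Nat.choose_eq_zero_of_lt (by simpa using hk)]
    simp
  have hweighted : ∑ k ∈ range (m + 1), (k : ℤ) * m.choose k = m * 2 ^ (m - 1) := by
    exact_mod_cast Nat.sum_range_mul_choose m
  have hrow : ∑ k ∈ range (m + 1), (m.choose k : ℤ) = 2 ^ m := by
    exact_mod_cast Nat.sum_range_choose m
  have hsplit : ∀ k, (1 - (-1 : ℤ) ^ k) * ((k + 1) * m.choose k) =
      k * m.choose k + m.choose k - (-1) ^ k * (k * m.choose k) - (-1) ^ k * m.choose k :=
    fun k => by ring
  have hpow : (2 : ℤ) ^ m = 2 * 2 ^ (m - 1) := by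
    rw [← pow_succ', Nat.sub_add_cancel (by omega)]
  have hodd : ∑ i ∈ range n, (((2 * i + 1 : ℕ) : ℤ) + 1) * m.choose (2 * i + 1) =
      2 * ∑ i ∈ range n, ((i : ℤ) + 1) * m.choose (2 * i + 1) := by
    rw [mul_sum]
    refine sum_congr rfl fun i _ => ?_
    push_cast
    ring
  have hfilter := two_mul_sum_range_odd (fun k => ((k : ℤ) + 1) * m.choose k) n
  rw [hodd, htrim, sum_congr rfl fun k _ => hsplit k, sum_sub_distrib, sum_sub_distrib,
    sum_add_distrib, hweighted, hrow, Int.alternating_sum_range_mul_choose hm,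
    Int.alternating_sum_range_choose_of_ne (by omega)] at hfilter
  linear_combination hfilter + hpow

theorem tKnot_eq_zero_of_le {c g : ℕ} (h : c ≤ 2 * g) : tKnot c g = 0 := by
  simp [tKnot, Nat.sub_eq_zero_of_le h]

theorem gTotal_eq_sum_range {c N : ℕ} (hN : c ≤ 2 * N + 2) :
    gTotal c = ∑ k ∈ range N, ((k : ℤ) + 1) * tKnot c (k + 1) := by
  have hsub : range ((c - 1) / 2) ⊆ range N := range_subset_range.2 (by omega)
  rw [gTotal, ← Ico_add_one_right_eq_Icc, sum_Ico_eq_sum_range, Nat.add_sub_cancel]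
  rw [← sum_subset hsub fun k _ hk => ?_]
  · exact sum_congr rfl fun k _ => by push_cast; ring_nf
  · rw [mem_range, not_lt] at hk
    rw [tKnot_eq_zero_of_le (by omega), mul_zero]

theorem tKnot_succ_add_tKnot (c j : ℕ) :
    tKnot (c + 1) (j + 1) + tKnot c (j + 1) = (c - 1).choose (2 * j + 1) := by
  by_cases h : 2 * (j + 1) ≤ c
  · obtain ⟨d, rfl⟩ := Nat.exists_eq_add_of_le h
    have hsq : ((-1 : ℤ) ^ d) ^ 2 = 1 := by rw [← pow_mul, mul_comm, pow_mul, neg_one_sq, one_pow]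
    simp only [tKnot, Nat.add_one_ne_zero, if_false]
    rw [show 2 * (j + 1) + d + 1 - 2 * (j + 1) = d + 1 by omega,
      show 2 * (j + 1) + d - 2 * (j + 1) = d by omega, sum_range_succ,
      show 2 * (j + 1) + d + 1 - 1 = 2 * (j + 1) + d by omega,
      show 2 * (j + 1) + d - 1 = 2 * j + 1 + d by omega,
      show d + 2 * (j + 1) - 1 = 2 * j + 1 + d by omega,
      Nat.choose_symm_add (a := 2 * j + 1)]
    simp only [pow_add, pow_mul, neg_one_sq, one_pow, one_mul, pow_one]
    linear_combination ((2 * j + 1 + d).choose d : ℤ) * hsq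
  · rw [tKnot_eq_zero_of_le (by omega), tKnot_eq_zero_of_le (by omega),
      Nat.choose_eq_zero_of_lt (by omega)]
    simp

theorem gTotal_succ_add_gTotal {c : ℕ} (hc : 3 ≤ c) :
    16 * (gTotal (c + 1) + gTotal c) = (c + 1) * 2 ^ c := by
  obtain ⟨m, rfl⟩ : ∃ m, c = m + 1 := ⟨c - 1, by omega⟩
  have hodd := sum_range_succ_mul_choose_odd (m := m) (n := m + 1) (by omega) (by omega)
  have hpow : (2 : ℤ) ^ (m + 1) = 4 * 2 ^ (m - 1) := by
    rw [show m + 1 = m - 1 + 2 by omega, pow_add]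
    ring
  rw [gTotal_eq_sum_range (N := m + 1) (by omega), gTotal_eq_sum_range (N := m + 1) (by omega),
    ← sum_add_distrib]
  simp only [← mul_add, tKnot_succ_add_tKnot, Nat.add_sub_cancel]
  rw [hpow]
  push_cast
  linear_combination 4 * hodd

/-- For all integers c ≥ 3, the total genus satisfies
432·g(c) = (9c+3)·2^c − 192·(−1)^c, i.e. g(c) = ((9c+3)·2^{c−3} − 24·(−1)^c)/54. -/
theorem gTotal_formula (c : ℕ) (hc : 3 ≤ c) :
    432 * gTotal c = (9 * (c : ℤ) + 3) * 2 ^ c - 192 * (-1 : ℤ) ^ c := by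
  induction c, hc using Nat.le_induction with
  | base => decide
  | succ n hn ih =>
    rw [pow_succ, pow_succ]
    push_cast
    linear_combination 27 * gTotal_succ_add_gTotal hn - ih
end
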